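/- Let k be a field and u, z ≥ 1 integers. Define c : J_u → J_z to be multiplication by T^{z−1} if u = 1, and multiplication by T^{max(z−2, 0)} if u ≥ 2 (in particular, the canonical reduction map when z ≤ 2 ≤ u). Then T²∘c = 0 and the triple (J_u, J_z, c) is indecomposable. -/
import Mathlib


open Polynomial

/-- `J K a` is the `K[T]`-module `K[T]/(T^a)` (with `T` the polynomial variable `X`). -/
abbrev J (K : Type*) [Field K] (a : ℕ) : Type _ :=
  Polynomial K ⧸ Ideal.span {(X : Polynomial K) ^ a}

/-- Multiplication by `T^e` as a `K[T]`-linear map `J_a → J_b`; it is well defined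
when `b ≤ e + a`, and we set it to `0` otherwise. -/
noncomputable def mulTpow (K : Type*) [Field K] (a b e : ℕ) :
    J K a →ₗ[Polynomial K] J K b :=
  if h : b ≤ e + a then
    Submodule.liftQ (Ideal.span {(X : Polynomial K) ^ a})
      ((Ideal.span {(X : Polynomial K) ^ b}).mkQ ∘ₗ
        ((X : Polynomial K) ^ e • (LinearMap.id : Polynomial K →ₗ[Polynomial K] Polynomial K)))
      (by
        refine Submodule.span_le.mpr ?_
        intro x hx
        rw [Set.mem_singleton_iff] at hx
        subst hx
        simp only [SetLike.mem_coe, LinearMap.mem_ker, LinearMap.comp_apply,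
          LinearMap.smul_apply, LinearMap.id_apply, Submodule.mkQ_apply,
          Submodule.Quotient.mk_eq_zero, smul_eq_mul]
        exact Ideal.mem_span_singleton.mpr (by
          rw [← pow_add]; exact pow_dvd_pow X h))
  else 0

/-- A triple `(M, N, C)` is indecomposable if `M ⊕ N ≠ 0` and the only idempotent
endomorphism pairs `(F, G)` (i.e. `G ∘ C = C ∘ F`, `F² = F`, `G² = G`) are `(0, 0)` and
`(id, id)`. -/
def TripleIndecomposable {K : Type*} [Field K] {M N : Type*}
    [AddCommGroup M] [Module (Polynomial K) M]
    [AddCommGroup N] [Module (Polynomial K) N] (C : M →ₗ[Polynomial K] N) : Prop :=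
  (Nontrivial M ∨ Nontrivial N) ∧
  ∀ (F : M →ₗ[Polynomial K] M) (G : N →ₗ[Polynomial K] N),
    G ∘ₗ C = C ∘ₗ F → F ∘ₗ F = F → G ∘ₗ G = G →
      (F = 0 ∧ G = 0) ∨ (F = LinearMap.id ∧ G = LinearMap.id)

lemma mulTpow_apply (K : Type*) [Field K] (a b e : ℕ) (h : b ≤ e + a) (p : Polynomial K) :
    mulTpow K a b e (Submodule.Quotient.mk p) =
      Submodule.Quotient.mk ((X : Polynomial K) ^ e * p) := by
  rw [mulTpow, dif_pos h]
  rfl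

lemma J_idem (K : Type*) [Field K] (a : ℕ) (F : J K a →ₗ[Polynomial K] J K a)
    (hF : F ∘ₗ F = F) : F = 0 ∨ F = LinearMap.id := by
  obtain ⟨f, hf⟩ := Submodule.mkQ_surjective (Ideal.span {(X : Polynomial K) ^ a})
    (F (Submodule.Quotient.mk 1))
  rw [Submodule.mkQ_apply] at hf
  have key : ∀ p : Polynomial K, F (Submodule.Quotient.mk p) =
      Submodule.Quotient.mk (p * f) := by
    intro p
    have h1 : (Submodule.Quotient.mk p : J K a) = p • Submodule.Quotient.mk 1 := by
      rw [← Submodule.Quotient.mk_smul, smul_eq_mul, mul_one]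
    rw [h1, map_smul, ← hf, ← Submodule.Quotient.mk_smul, smul_eq_mul]
  have hff : (Submodule.Quotient.mk (f * f) : J K a) = Submodule.Quotient.mk f := by
    have h2 := congrArg (fun L : J K a →ₗ[Polynomial K] J K a =>
      L (Submodule.Quotient.mk 1 : J K a)) hF
    simp only [LinearMap.comp_apply, key, one_mul] at h2
    exact h2
  have hmem : f * f - f ∈ Ideal.span {(X : Polynomial K) ^ a} :=
    (Submodule.Quotient.eq _).mp hff
  have hdvd : (X : Polynomial K) ^ a ∣ f * (f - 1) := by
    have := Ideal.mem_span_singleton.mp hmem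
    convert this using 1
    ring
  by_cases hd : (X : Polynomial K) ∣ f
  · have h1 : ¬ (X : Polynomial K) ∣ (f - 1) := by
      intro h2
      have h3 : (X : Polynomial K) ∣ 1 := by
        have := dvd_sub hd h2
        simpa using this
      exact Polynomial.not_isUnit_X (isUnit_of_dvd_one h3)
    have hXa : (X : Polynomial K) ^ a ∣ f :=
      (Polynomial.prime_X).pow_dvd_of_dvd_mul_right a h1 hdvd
    have hf0 : (Submodule.Quotient.mk f : J K a) = 0 := by
      rw [Submodule.Quotient.mk_eq_zero]
      exact Ideal.mem_span_singleton.mpr hXa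
    left
    apply LinearMap.ext
    intro x
    obtain ⟨p, rfl⟩ := Submodule.mkQ_surjective _ x
    rw [Submodule.mkQ_apply, key]
    have : (Submodule.Quotient.mk (p * f) : J K a) = p • Submodule.Quotient.mk f := by
      rw [← Submodule.Quotient.mk_smul, smul_eq_mul]
    rw [this, hf0, smul_zero]
    rfl
  · have hXa : (X : Polynomial K) ^ a ∣ (f - 1) :=
      (Polynomial.prime_X).pow_dvd_of_dvd_mul_left a hd hdvd
    have hf1 : (Submodule.Quotient.mk f : J K a) = Submodule.Quotient.mk 1 := by
      rw [Submodule.Quotient.eq]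
      exact Ideal.mem_span_singleton.mpr hXa
    right
    apply LinearMap.ext
    intro x
    obtain ⟨p, rfl⟩ := Submodule.mkQ_surjective _ x
    rw [Submodule.mkQ_apply, key]
    have : (Submodule.Quotient.mk (p * f) : J K a) = p • Submodule.Quotient.mk f := by
      rw [← Submodule.Quotient.mk_smul, smul_eq_mul]
    rw [this, hf1, ← Submodule.Quotient.mk_smul, smul_eq_mul, mul_one]
    rfl

lemma J_mk_one_ne_zero (K : Type*) [Field K] (a : ℕ) (ha : 1 ≤ a) :
    (Submodule.Quotient.mk 1 : J K a) ≠ 0 := by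
  rw [Ne, Submodule.Quotient.mk_eq_zero]
  intro h
  have hdvd : (X : Polynomial K) ^ a ∣ 1 := Ideal.mem_span_singleton.mp h
  have := Polynomial.natDegree_le_of_dvd hdvd one_ne_zero
  simp [Polynomial.natDegree_X_pow] at this
  omega

/-- For `u, z ≥ 1`, the map `c : J_u → J_z` given by multiplication by `T^{z-1}` if
`u = 1` and by `T^{max(z-2,0)}` if `u ≥ 2` satisfies `T² ∘ c = 0`, and the triple
`(J_u, J_z, c)` is indecomposable. -/
theorem triple_1x1_indecomposable (K : Type*) [Field K] (u z : ℕ)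
    (hu : 1 ≤ u) (hz : 1 ≤ z) :
    (∀ x, ((X : Polynomial K) ^ 2) • (mulTpow K u z (if u = 1 then z - 1 else z - 2)) x = 0) ∧
    TripleIndecomposable (mulTpow K u z (if u = 1 then z - 1 else z - 2)) := by
  set e := (if u = 1 then z - 1 else z - 2) with he
  have hbe : z ≤ e + u := by rw [he]; split <;> omega
  have he2 : z ≤ 2 + e := by rw [he]; split <;> omega
  have hez : e < z := by rw [he]; split <;> omega
  have hC1 : mulTpow K u z e (Submodule.Quotient.mk 1) =
      Submodule.Quotient.mk ((X : Polynomial K) ^ e) := by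
    rw [mulTpow_apply K u z e hbe, mul_one]
  have hC1ne : mulTpow K u z e (Submodule.Quotient.mk 1) ≠ 0 := by
    rw [hC1, Ne, Submodule.Quotient.mk_eq_zero]
    intro h
    have hdvd : (X : Polynomial K) ^ z ∣ (X : Polynomial K) ^ e :=
      Ideal.mem_span_singleton.mp h
    have := Polynomial.natDegree_le_of_dvd hdvd (pow_ne_zero _ Polynomial.X_ne_zero)
    simp [Polynomial.natDegree_X_pow] at this
    omega
  constructor
  · intro x
    obtain ⟨p, rfl⟩ := Submodule.mkQ_surjective _ x
    rw [Submodule.mkQ_apply, mulTpow_apply K u z e hbe, ← Submodule.Quotient.mk_smul,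
      smul_eq_mul, Submodule.Quotient.mk_eq_zero]
    refine Ideal.mem_span_singleton.mpr ?_
    exact (pow_dvd_pow (X : Polynomial K) he2).trans ⟨p, by rw [pow_add]; ring⟩
  · constructor
    · exact Or.inl ⟨Submodule.Quotient.mk 1, 0, J_mk_one_ne_zero K u hu⟩
    · intro F G hcomm hF hG
      rcases J_idem K u F hF with hF0 | hFid <;> rcases J_idem K z G hG with hG0 | hGid
      · exact Or.inl ⟨hF0, hG0⟩
      · exfalso
        apply hC1ne
        have := congrArg (fun L : J K u →ₗ[Polynomial K] J K z =>
          L (Submodule.Quotient.mk 1 : J K u)) hcomm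
        simp only [LinearMap.comp_apply, hF0, hGid, LinearMap.zero_apply,
          LinearMap.id_apply, map_zero] at this
        rw [← this]
      · exfalso
        apply hC1ne
        have := congrArg (fun L : J K u →ₗ[Polynomial K] J K z =>
          L (Submodule.Quotient.mk 1 : J K u)) hcomm
        simp only [LinearMap.comp_apply, hFid, hG0, LinearMap.zero_apply,
          LinearMap.id_apply] at this
        rw [this]
      · exact Or.inr ⟨hFid, hGid⟩
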